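/- Let k be a positive integer. There exist a permutation matrix P of size 2k(k+1) and a permutation matrix Q of size 2k²+2k+1 such that P·[[E_kᵀ⊗I_k, I_{k+1}⊗E_k],[F_kᵀ⊗I_k, I_{k+1}⊗F_k]]·Q equals the block-diagonal direct sum M₁ ⊕ M₁ ⊕ M₃ ⊕ M₃ ⊕ ⋯ ⊕ M_{2k−1} ⊕ M_{2k−1} ⊕ N_{2k}, where M_j denotes the j×j matrix with ones on the main diagonal and on the first superdiagonal and zeros elsewhere, and N_j denotes the j×(j+1) matrix with ones on the main diagonal and on the first superdiagonal and zeros elsewhere. -/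

import Mathlib

open Matrix
open scoped Kronecker

noncomputable section

/-- The `k × (k+1)` matrix `E_k = [I_k 0]`. -/
def Ek (𝕜 : Type*) [RCLike 𝕜] (k : ℕ) : Matrix (Fin k) (Fin (k+1)) 𝕜 :=
  Matrix.of fun i j => if (j : ℕ) = (i : ℕ) then 1 else 0

/-- The `k × (k+1)` matrix `F_k = [0 I_k]`. -/
def Fk (𝕜 : Type*) [RCLike 𝕜] (k : ℕ) : Matrix (Fin k) (Fin (k+1)) 𝕜 :=
  Matrix.of fun i j => if (j : ℕ) = (i : ℕ) + 1 then 1 else 0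

/-- The standard unit vector `(0, …, 0, 1)ᵀ` of size `k+1`. -/
def evec (𝕜 : Type*) [RCLike 𝕜] (k : ℕ) : Fin (k+1) → 𝕜 :=
  fun i => if (i : ℕ) = k then 1 else 0

variable {𝕜 : Type*} [RCLike 𝕜]

/-- Frobenius norm of a matrix. -/
def frobNorm {p q : Type*} [Fintype p] [Fintype q] (M : Matrix p q 𝕜) : ℝ :=
  Real.sqrt (∑ i, ∑ j, ‖M i j‖ ^ 2)

/-- Spectral norm (largest singular value) of a matrix. -/
def specNorm {p q : Type*} [Fintype p] [Fintype q] [DecidableEq p] (M : Matrix p q 𝕜) : ℝ :=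
  Real.sqrt (⨆ i, (Matrix.isHermitian_mul_conjTranspose_self M).eigenvalues i)

/-- Smallest singular value of a `p × q` matrix with `p ≤ q`
(the `p`-th largest singular value). -/
def sigmaMin {p q : Type*} [Fintype p] [Fintype q] [DecidableEq p] (M : Matrix p q 𝕜) : ℝ :=
  Real.sqrt (⨅ i, (Matrix.isHermitian_mul_conjTranspose_self M).eigenvalues i)

/-- Euclidean norm of a vector. -/
def vecNorm {q : Type*} [Fintype q] (x : q → 𝕜) : ℝ :=
  Real.sqrt (∑ i, ‖x i‖ ^ 2)

/-- Frobenius norm of the pencil `P.1 - λ • P.2`. -/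
def pFrob {p q : Type*} [Fintype p] [Fintype q] (P : Matrix p q 𝕜 × Matrix p q 𝕜) : ℝ :=
  Real.sqrt (frobNorm P.1 ^ 2 + frobNorm P.2 ^ 2)

/-- Spectral norm of the pencil `P.1 - λ • P.2`. -/
def pSpec {p q : Type*} [Fintype p] [Fintype q] [DecidableEq p]
    (P : Matrix p q 𝕜 × Matrix p q 𝕜) : ℝ :=
  Real.sqrt (specNorm P.1 ^ 2 + specNorm P.2 ^ 2)

/-- A 3×3 block matrix. -/
def blocks3 {R1 R2 R3 C1 C2 C3 : Type*}
    (M11 : Matrix R1 C1 𝕜) (M12 : Matrix R1 C2 𝕜) (M13 : Matrix R1 C3 𝕜)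
    (M21 : Matrix R2 C1 𝕜) (M22 : Matrix R2 C2 𝕜) (M23 : Matrix R2 C3 𝕜)
    (M31 : Matrix R3 C1 𝕜) (M32 : Matrix R3 C2 𝕜) (M33 : Matrix R3 C3 𝕜) :
    Matrix (R1 ⊕ (R2 ⊕ R3)) (C1 ⊕ (C2 ⊕ C3)) 𝕜 :=
  Matrix.fromBlocks M11 (Matrix.fromCols M12 M13) (Matrix.fromRows M21 M31)
    (Matrix.fromBlocks M22 M23 M32 M33)

/-- `K̂₂ᵀ C = (e_{η+1} ⊗ I_m) C`. -/
def colUnit {m ℓ : ℕ} (η : ℕ) (C : Matrix (Fin m) (Fin ℓ) 𝕜) :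
    Matrix (Fin (η+1) × Fin m) (Fin ℓ) 𝕜 :=
  Matrix.of fun i j => evec 𝕜 η i.1 * C i.2 j

/-- `B K̂₁ = B (e_{ε+1}ᵀ ⊗ I_n)`. -/
def rowUnit {n ℓ : ℕ} (ε : ℕ) (B : Matrix (Fin ℓ) (Fin n) 𝕜) :
    Matrix (Fin ℓ) (Fin (ε+1) × Fin n) 𝕜 :=
  Matrix.of fun i j => evec 𝕜 ε j.1 * B i j.2

/-- Row index type of a block Kronecker pencil. -/
abbrev SRow (m ℓ ε η n : ℕ) := (Fin (η+1) × Fin m) ⊕ (Fin ℓ ⊕ (Fin ε × Fin n))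

/-- Column index type of a block Kronecker pencil. -/
abbrev SCol (m ℓ ε η n : ℕ) := (Fin (ε+1) × Fin n) ⊕ (Fin ℓ ⊕ (Fin η × Fin m))

/-- The block Kronecker pencil
`S(λ) = [[M(λ), K̂₂ᵀC, K₂ᵀ(λ)], [BK̂₁, A-λI, 0], [K₁(λ), 0, 0]]`
represented as a pair `(Sa, Sb)` with `S(λ) = Sa - λ Sb`. -/
def blockKron (m n ℓ ε η : ℕ) (A : Matrix (Fin ℓ) (Fin ℓ) 𝕜) (B : Matrix (Fin ℓ) (Fin n) 𝕜)
    (C : Matrix (Fin m) (Fin ℓ) 𝕜)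
    (M : Matrix (Fin (η+1) × Fin m) (Fin (ε+1) × Fin n) 𝕜 ×
         Matrix (Fin (η+1) × Fin m) (Fin (ε+1) × Fin n) 𝕜) :
    Matrix (SRow m ℓ ε η n) (SCol m ℓ ε η n) 𝕜 × Matrix (SRow m ℓ ε η n) (SCol m ℓ ε η n) 𝕜 :=
  (blocks3 M.1 (colUnit η C) ((Ek 𝕜 η)ᵀ ⊗ₖ (1 : Matrix (Fin m) (Fin m) 𝕜))
      (rowUnit ε B) A 0
      (Ek 𝕜 ε ⊗ₖ (1 : Matrix (Fin n) (Fin n) 𝕜)) 0 0,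
   blocks3 M.2 0 ((Fk 𝕜 η)ᵀ ⊗ₖ (1 : Matrix (Fin m) (Fin m) 𝕜))
      0 1 0
      (Fk 𝕜 ε ⊗ₖ (1 : Matrix (Fin n) (Fin n) 𝕜)) 0 0)

/-- Row index type of the matrix `T`. -/
abbrev TRow (m ℓ ε η n : ℕ) :=
  (((Fin η × Fin m) × Fin ℓ) ⊕ ((Fin η × Fin m) × Fin ℓ)) ⊕
  (((Fin ℓ × (Fin ε × Fin n)) ⊕ (Fin ℓ × (Fin ε × Fin n))) ⊕
   (((Fin η × Fin m) × (Fin ε × Fin n)) ⊕ ((Fin η × Fin m) × (Fin ε × Fin n))))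

/-- Column index type of the matrix `T`. -/
abbrev TCol (m ℓ ε η n : ℕ) :=
  (((Fin (η+1) × Fin m) × Fin ℓ) ⊕ ((Fin η × Fin m) × Fin ℓ)) ⊕
  (((Fin ℓ × (Fin ε × Fin n)) ⊕ (Fin ℓ × (Fin (ε+1) × Fin n))) ⊕
   (((Fin (η+1) × Fin m) × (Fin ε × Fin n)) ⊕ ((Fin η × Fin m) × (Fin (ε+1) × Fin n))))

/-- The 6×6 block matrix `T`. -/
def Tmat (m n ℓ ε η : ℕ) (A : Matrix (Fin ℓ) (Fin ℓ) 𝕜) (B : Matrix (Fin ℓ) (Fin n) 𝕜)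
    (C : Matrix (Fin m) (Fin ℓ) 𝕜) : Matrix (TRow m ℓ ε η n) (TCol m ℓ ε η n) 𝕜 :=
  Matrix.fromRows
    (Matrix.fromCols
      (Matrix.fromBlocks
        ((Ek 𝕜 η ⊗ₖ (1 : Matrix (Fin m) (Fin m) 𝕜)) ⊗ₖ (1 : Matrix (Fin ℓ) (Fin ℓ) 𝕜))
        ((1 : Matrix (Fin η × Fin m) (Fin η × Fin m) 𝕜) ⊗ₖ A)
        ((Fk 𝕜 η ⊗ₖ (1 : Matrix (Fin m) (Fin m) 𝕜)) ⊗ₖ (1 : Matrix (Fin ℓ) (Fin ℓ) 𝕜))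
        ((1 : Matrix (Fin η × Fin m) (Fin η × Fin m) 𝕜) ⊗ₖ (1 : Matrix (Fin ℓ) (Fin ℓ) 𝕜)))
      (Matrix.fromCols 0
        (Matrix.fromBlocks 0
          ((1 : Matrix (Fin η × Fin m) (Fin η × Fin m) 𝕜) ⊗ₖ (rowUnit ε B))
          0 0)))
    (Matrix.fromRows
      (Matrix.fromCols 0
        (Matrix.fromCols
          (Matrix.fromBlocks
            (Aᵀ ⊗ₖ (1 : Matrix (Fin ε × Fin n) (Fin ε × Fin n) 𝕜))
            ((1 : Matrix (Fin ℓ) (Fin ℓ) 𝕜) ⊗ₖ (Ek 𝕜 ε ⊗ₖ (1 : Matrix (Fin n) (Fin n) 𝕜)))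
            ((1 : Matrix (Fin ℓ) (Fin ℓ) 𝕜) ⊗ₖ (1 : Matrix (Fin ε × Fin n) (Fin ε × Fin n) 𝕜))
            ((1 : Matrix (Fin ℓ) (Fin ℓ) 𝕜) ⊗ₖ (Fk 𝕜 ε ⊗ₖ (1 : Matrix (Fin n) (Fin n) 𝕜))))
          (Matrix.fromBlocks
            (Matrix.of fun (i : Fin ℓ × (Fin ε × Fin n))
                (j : (Fin (η+1) × Fin m) × (Fin ε × Fin n)) =>
              evec 𝕜 η j.1.1 * C j.1.2 i.1 * (if i.2 = j.2 then 1 else 0))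
            0 0 0)))
      (Matrix.fromCols 0
        (Matrix.fromCols 0
          (Matrix.fromBlocks
            ((Ek 𝕜 η ⊗ₖ (1 : Matrix (Fin m) (Fin m) 𝕜)) ⊗ₖ
              (1 : Matrix (Fin ε × Fin n) (Fin ε × Fin n) 𝕜))
            ((1 : Matrix (Fin η × Fin m) (Fin η × Fin m) 𝕜) ⊗ₖ
              (Ek 𝕜 ε ⊗ₖ (1 : Matrix (Fin n) (Fin n) 𝕜)))
            ((Fk 𝕜 η ⊗ₖ (1 : Matrix (Fin m) (Fin m) 𝕜)) ⊗ₖ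
              (1 : Matrix (Fin ε × Fin n) (Fin ε × Fin n) 𝕜))
            ((1 : Matrix (Fin η × Fin m) (Fin η × Fin m) 𝕜) ⊗ₖ
              (Fk 𝕜 ε ⊗ₖ (1 : Matrix (Fin n) (Fin n) 𝕜)))))))

/-- The 6×6 block matrix `ΔT` built from the blocks of the perturbation pencil. -/
def DeltaT (m n ℓ ε η : ℕ)
    (Δ12a Δ12b : Matrix (Fin (η+1) × Fin m) (Fin ℓ) 𝕜)
    (Δ13a Δ13b : Matrix (Fin (η+1) × Fin m) (Fin η × Fin m) 𝕜)
    (Δ21a Δ21b : Matrix (Fin ℓ) (Fin (ε+1) × Fin n) 𝕜)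
    (Δ22a Δ22b : Matrix (Fin ℓ) (Fin ℓ) 𝕜)
    (Δ23a Δ23b : Matrix (Fin ℓ) (Fin η × Fin m) 𝕜)
    (Δ31a Δ31b : Matrix (Fin ε × Fin n) (Fin (ε+1) × Fin n) 𝕜)
    (Δ32a Δ32b : Matrix (Fin ε × Fin n) (Fin ℓ) 𝕜) :
    Matrix (TRow m ℓ ε η n) (TCol m ℓ ε η n) 𝕜 :=
  Matrix.fromRows
    (Matrix.fromCols
      (Matrix.fromBlocks
        (Δ13aᵀ ⊗ₖ (1 : Matrix (Fin ℓ) (Fin ℓ) 𝕜))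
        ((1 : Matrix (Fin η × Fin m) (Fin η × Fin m) 𝕜) ⊗ₖ Δ22a)
        (Δ13bᵀ ⊗ₖ (1 : Matrix (Fin ℓ) (Fin ℓ) 𝕜))
        ((1 : Matrix (Fin η × Fin m) (Fin η × Fin m) 𝕜) ⊗ₖ Δ22b))
      (Matrix.fromCols 0
        (Matrix.fromBlocks 0 ((1 : Matrix (Fin η × Fin m) (Fin η × Fin m) 𝕜) ⊗ₖ Δ21a)
          0 ((1 : Matrix (Fin η × Fin m) (Fin η × Fin m) 𝕜) ⊗ₖ Δ21b))))
    (Matrix.fromRows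
      (Matrix.fromCols 0
        (Matrix.fromCols
          (Matrix.fromBlocks
            (Δ22aᵀ ⊗ₖ (1 : Matrix (Fin ε × Fin n) (Fin ε × Fin n) 𝕜))
            ((1 : Matrix (Fin ℓ) (Fin ℓ) 𝕜) ⊗ₖ Δ31a)
            (Δ22bᵀ ⊗ₖ (1 : Matrix (Fin ε × Fin n) (Fin ε × Fin n) 𝕜))
            ((1 : Matrix (Fin ℓ) (Fin ℓ) 𝕜) ⊗ₖ Δ31b))
          (Matrix.fromBlocks
            (Δ12aᵀ ⊗ₖ (1 : Matrix (Fin ε × Fin n) (Fin ε × Fin n) 𝕜)) 0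
            (Δ12bᵀ ⊗ₖ (1 : Matrix (Fin ε × Fin n) (Fin ε × Fin n) 𝕜)) 0)))
      (Matrix.fromCols
        (Matrix.fromBlocks 0 ((1 : Matrix (Fin η × Fin m) (Fin η × Fin m) 𝕜) ⊗ₖ Δ32a)
          0 ((1 : Matrix (Fin η × Fin m) (Fin η × Fin m) 𝕜) ⊗ₖ Δ32b))
        (Matrix.fromCols
          (Matrix.fromBlocks
            (Δ23aᵀ ⊗ₖ (1 : Matrix (Fin ε × Fin n) (Fin ε × Fin n) 𝕜)) 0
            (Δ23bᵀ ⊗ₖ (1 : Matrix (Fin ε × Fin n) (Fin ε × Fin n) 𝕜)) 0)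
          (Matrix.fromBlocks
            (Δ13aᵀ ⊗ₖ (1 : Matrix (Fin ε × Fin n) (Fin ε × Fin n) 𝕜))
            ((1 : Matrix (Fin η × Fin m) (Fin η × Fin m) 𝕜) ⊗ₖ Δ31a)
            (Δ13bᵀ ⊗ₖ (1 : Matrix (Fin ε × Fin n) (Fin ε × Fin n) 𝕜))
            ((1 : Matrix (Fin η × Fin m) (Fin η × Fin m) 𝕜) ⊗ₖ Δ31b)))))

/-- `(Λ_k(x) ⊗ I_m)` where `Λ_k(x) = (x^k, …, x, 1)ᵀ`. -/
def LamI (𝕜 : Type*) [RCLike 𝕜] (k m : ℕ) (x : 𝕜) :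
    Matrix (Fin (k+1) × Fin m) (Fin m) 𝕜 :=
  Matrix.of fun i j => if i.2 = j then x ^ (k - (i.1 : ℕ)) else 0

/-- `(A, B)` is controllable if the controllability matrix `[B, AB, …, A^{ℓ-1}B]`
has full rank `ℓ`. -/
def Controllable {ℓ n : ℕ} (A : Matrix (Fin ℓ) (Fin ℓ) 𝕜)
    (B : Matrix (Fin ℓ) (Fin n) 𝕜) : Prop :=
  (Matrix.of fun (i : Fin ℓ) (p : Fin ℓ × Fin n) => (A ^ (p.1 : ℕ) * B) i p.2).rank = ℓ

/-- `(A, C)` is observable if `(Aᵀ, Cᵀ)` is controllable. -/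
def Observable {ℓ m : ℕ} (A : Matrix (Fin ℓ) (Fin ℓ) 𝕜)
    (C : Matrix (Fin m) (Fin ℓ) 𝕜) : Prop :=
  Controllable Aᵀ Cᵀ

end

/-!
Read the rows of the pencil matrix as edges and its columns as vertices: row `(p, q)` of the
first block row meets the columns `(p, q)` of both block columns, row `(p, q)` of the second
block row meets the columns `(p - 1, q)` and `(p, q + 1)`. Every edge stays on a diagonal
`δ = p - q` of the grid, and each diagonal is a path. Numbering the rows and columns along a
diagonal by positions `t` such that row `t` meets exactly columns `t` and `t + 1` gives
coordinates `(δ, t)` in which the pencil and the direct sum of bidiagonal blocks have the same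
entries. The diagonal `δ = 0` carries `N_{2k}` and the diagonals `±(k - i)` carry the two copies
of `M_{2i+1}`; on the negative diagonals the block is traversed backwards, so that the row
meeting a single column comes last. Sending each block index to the pencil index with the same
coordinates is therefore injective, hence bijective by counting.
-/

def bidiagEntry {R : Type*} [Zero R] [One R] (x y : ℤ × ℤ) : R :=
  if y.1 = x.1 ∧ (y.2 = x.2 ∨ y.2 = x.2 + 1) then 1 else 0

def pencilRowCoord (k : ℕ) : (Fin (k+1) × Fin k) ⊕ (Fin (k+1) × Fin k) → ℤ × ℤ
  | .inl (p, q) => ((p : ℤ) - q, 2 * min (p : ℤ) q)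
  -- `p = 0` gives position `-1`: that row meets only the column at position `0`.
  | .inr (p, q) => ((p : ℤ) - 1 - q, 2 * min ((p : ℤ) - 1) q + 1)

def pencilColCoord (k : ℕ) : (Fin k × Fin k) ⊕ (Fin (k+1) × Fin (k+1)) → ℤ × ℤ
  | .inl (a, b) => ((a : ℤ) - b, 2 * min (a : ℤ) b + 1)
  | .inr (c, d) => ((c : ℤ) - d, 2 * min (c : ℤ) d)

theorem pencil_apply_eq_bidiagEntry {𝕜 : Type*} [RCLike 𝕜] (k : ℕ)
    (r : (Fin (k+1) × Fin k) ⊕ (Fin (k+1) × Fin k))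
    (c : (Fin k × Fin k) ⊕ (Fin (k+1) × Fin (k+1))) :
    Matrix.fromBlocks
      ((Ek 𝕜 k)ᵀ ⊗ₖ (1 : Matrix (Fin k) (Fin k) 𝕜))
      ((1 : Matrix (Fin (k+1)) (Fin (k+1)) 𝕜) ⊗ₖ Ek 𝕜 k)
      ((Fk 𝕜 k)ᵀ ⊗ₖ (1 : Matrix (Fin k) (Fin k) 𝕜))
      ((1 : Matrix (Fin (k+1)) (Fin (k+1)) 𝕜) ⊗ₖ Fk 𝕜 k) r c =
    bidiagEntry (pencilRowCoord k r) (pencilColCoord k c) := by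
  rcases r with ⟨p, q⟩ | ⟨p, q⟩ <;> rcases c with ⟨a, b⟩ | ⟨a, b⟩ <;>
    simp only [fromBlocks_apply₁₁, fromBlocks_apply₁₂, fromBlocks_apply₂₁, fromBlocks_apply₂₂,
      kroneckerMap_apply, transpose_apply, one_apply, Ek, Fk, of_apply, pencilRowCoord,
      pencilColCoord, bidiagEntry, Fin.ext_iff, mul_ite, ite_mul, one_mul, zero_mul, min_def] <;>
    split_ifs <;> first | rfl | (exfalso; omega)

abbrev BlockIndex (k : ℕ) := Σ i : Fin k, Bool × Fin (2 * (i : ℕ) + 1)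

def blockRowCoord (k : ℕ) : BlockIndex k ⊕ Fin (2 * k) → ℤ × ℤ
  | .inl ⟨i, false, r⟩ => (k - i, r)
  | .inl ⟨i, true, r⟩ => (i - k, 2 * i - 1 - r)
  | .inr r => (0, r)

def blockColCoord (k : ℕ) : BlockIndex k ⊕ Fin (2 * k + 1) → ℤ × ℤ
  | .inl ⟨i, false, c⟩ => (k - i, c)
  | .inl ⟨i, true, c⟩ => (i - k, 2 * i - c)
  | .inr c => (0, c)

def bidiagDirectSum (R : Type*) [Zero R] [One R] (k : ℕ) :
    Matrix (BlockIndex k ⊕ Fin (2 * k)) (BlockIndex k ⊕ Fin (2 * k + 1)) R :=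
  fromBlocks
    (of fun x y => if x.1 = y.1 ∧ x.2.1 = y.2.1 ∧
      ((y.2.2 : ℕ) = x.2.2 ∨ (y.2.2 : ℕ) = x.2.2 + 1) then 1 else 0)
    0 0
    (of fun r c => if (c : ℕ) = r ∨ (c : ℕ) = r + 1 then 1 else 0)

theorem bidiagDirectSum_apply (R : Type*) [Zero R] [One R] (k : ℕ)
    (r : BlockIndex k ⊕ Fin (2 * k)) (c : BlockIndex k ⊕ Fin (2 * k + 1)) :
    bidiagDirectSum R k r c = bidiagEntry (blockRowCoord k r) (blockColCoord k c) := by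
  rcases r with ⟨i, _ | _, r⟩ | r <;> rcases c with ⟨j, _ | _, c⟩ | c <;>
    simp only [bidiagDirectSum, fromBlocks_apply₁₁, fromBlocks_apply₁₂, fromBlocks_apply₂₁,
      fromBlocks_apply₂₂, Matrix.zero_apply, of_apply, blockRowCoord, blockColCoord] <;>
    simp only [bidiagEntry, Fin.ext_iff, Bool.false_eq_true, Bool.true_eq_false, true_and,
      false_and, and_false, if_false] <;>
    first
    | (refine if_congr ?_ rfl rfl; omega)
    | (rw [if_neg]; omega)

theorem blockRowCoord_injective (k : ℕ) : Function.Injective (blockRowCoord k) := by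
  rintro (⟨i, _ | _, r⟩ | r) (⟨j, _ | _, s⟩ | s) h <;>
    simp only [blockRowCoord, Prod.mk.injEq] at h
  all_goals first
    | (exfalso; omega)
    | (obtain rfl : i = j := Fin.ext (by omega); obtain rfl : r = s := Fin.ext (by omega); rfl)
    | (obtain rfl : r = s := Fin.ext (by omega); rfl)

theorem blockColCoord_injective (k : ℕ) : Function.Injective (blockColCoord k) := by
  rintro (⟨i, _ | _, c⟩ | c) (⟨j, _ | _, d⟩ | d) h <;>
    simp only [blockColCoord, Prod.mk.injEq] at h
  all_goals first
    | (exfalso; omega)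
    | (obtain rfl : i = j := Fin.ext (by omega); obtain rfl : c = d := Fin.ext (by omega); rfl)
    | (obtain rfl : c = d := Fin.ext (by omega); rfl)

theorem card_blockIndex (k : ℕ) : Fintype.card (BlockIndex k) = 2 * k ^ 2 := by
  simp only [Fintype.card_sigma, Fintype.card_prod, Fintype.card_bool, Fintype.card_fin]
  rw [Fin.sum_univ_eq_sum_range (fun i => 2 * (2 * i + 1)) k]
  induction k with
  | zero => rfl
  | succ k ih => rw [Finset.sum_range_succ, ih]; ring

def blockRowToPencil (k : ℕ) :
    BlockIndex k ⊕ Fin (2 * k) → (Fin (k+1) × Fin k) ⊕ (Fin (k+1) × Fin k)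
  | .inl ⟨i, false, r⟩ =>
      if h : r.val % 2 = 0 then .inl (⟨k - i + r / 2, by omega⟩, ⟨r / 2, by omega⟩)
      else .inr (⟨k - i + r / 2 + 1, by omega⟩, ⟨r / 2, by omega⟩)
  | .inl ⟨i, true, r⟩ =>
      if h : r.val % 2 = 0 then .inr (⟨i - r / 2, by omega⟩, ⟨k - 1 - r / 2, by omega⟩)
      else .inl (⟨i - 1 - r / 2, by omega⟩, ⟨k - 1 - r / 2, by omega⟩)
  | .inr r =>
      if h : r.val % 2 = 0 then .inl (⟨r / 2, by omega⟩, ⟨r / 2, by omega⟩)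
      else .inr (⟨r / 2 + 1, by omega⟩, ⟨r / 2, by omega⟩)

def blockColToPencil (k : ℕ) :
    BlockIndex k ⊕ Fin (2 * k + 1) → (Fin k × Fin k) ⊕ (Fin (k+1) × Fin (k+1))
  | .inl ⟨i, false, c⟩ =>
      if h : c.val % 2 = 0 then .inr (⟨k - i + c / 2, by omega⟩, ⟨c / 2, by omega⟩)
      else .inl (⟨k - i + c / 2, by omega⟩, ⟨c / 2, by omega⟩)
  | .inl ⟨i, true, c⟩ =>
      if h : c.val % 2 = 0 then .inr (⟨i - c / 2, by omega⟩, ⟨k - c / 2, by omega⟩)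
      else .inl (⟨i - 1 - c / 2, by omega⟩, ⟨k - 1 - c / 2, by omega⟩)
  | .inr c =>
      if h : c.val % 2 = 0 then .inr (⟨c / 2, by omega⟩, ⟨c / 2, by omega⟩)
      else .inl (⟨c / 2, by omega⟩, ⟨c / 2, by omega⟩)

theorem pencilRowCoord_blockRowToPencil (k : ℕ) (r : BlockIndex k ⊕ Fin (2 * k)) :
    pencilRowCoord k (blockRowToPencil k r) = blockRowCoord k r := by
  rcases r with ⟨i, _ | _, r⟩ | r <;> simp only [blockRowToPencil] <;> split_ifs <;>
    simp only [pencilRowCoord, blockRowCoord, Prod.mk.injEq, min_def] <;> split_ifs <;> omega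

theorem pencilColCoord_blockColToPencil (k : ℕ) (c : BlockIndex k ⊕ Fin (2 * k + 1)) :
    pencilColCoord k (blockColToPencil k c) = blockColCoord k c := by
  rcases c with ⟨i, _ | _, c⟩ | c <;> simp only [blockColToPencil] <;> split_ifs <;>
    simp only [pencilColCoord, blockColCoord, Prod.mk.injEq, min_def] <;> split_ifs <;> omega

theorem Function.bijective_of_injective_comp_of_card_eq {α β γ : Type*} [Fintype α] [Fintype β]
    {f : α → β} (g : β → γ) (hgf : Function.Injective (g ∘ f))
    (hcard : Fintype.card α = Fintype.card β) : Function.Bijective f :=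
  (Fintype.bijective_iff_injective_and_card f).mpr ⟨hgf.of_comp, hcard⟩

theorem blockRowToPencil_bijective (k : ℕ) : Function.Bijective (blockRowToPencil k) := by
  refine Function.bijective_of_injective_comp_of_card_eq (pencilRowCoord k) ?_ ?_
  · simpa only [Function.comp_def, pencilRowCoord_blockRowToPencil] using blockRowCoord_injective k
  · simp only [Fintype.card_sum, Fintype.card_prod, Fintype.card_fin, card_blockIndex]
    ring

theorem blockColToPencil_bijective (k : ℕ) : Function.Bijective (blockColToPencil k) := by
  refine Function.bijective_of_injective_comp_of_card_eq (pencilColCoord k) ?_ ?_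
  · simpa only [Function.comp_def, pencilColCoord_blockColToPencil] using blockColCoord_injective k
  · simp only [Fintype.card_sum, Fintype.card_prod, Fintype.card_fin, card_blockIndex]
    ring

theorem statement4 (k : ℕ) :
    ∃ (er : ((Σ i : Fin k, Bool × Fin (2 * (i : ℕ) + 1)) ⊕ Fin (2 * k)) ≃
            ((Fin (k+1) × Fin k) ⊕ (Fin (k+1) × Fin k)))
      (ec : ((Σ i : Fin k, Bool × Fin (2 * (i : ℕ) + 1)) ⊕ Fin (2 * k + 1)) ≃
            ((Fin k × Fin k) ⊕ (Fin (k+1) × Fin (k+1)))),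
      (Matrix.fromBlocks
        ((Ek ℝ k)ᵀ ⊗ₖ (1 : Matrix (Fin k) (Fin k) ℝ))
        ((1 : Matrix (Fin (k+1)) (Fin (k+1)) ℝ) ⊗ₖ Ek ℝ k)
        ((Fk ℝ k)ᵀ ⊗ₖ (1 : Matrix (Fin k) (Fin k) ℝ))
        ((1 : Matrix (Fin (k+1)) (Fin (k+1)) ℝ) ⊗ₖ Fk ℝ k)).submatrix er ec =
      Matrix.of (fun r c =>
        match r, c with
        | Sum.inl ⟨i, b, ri⟩, Sum.inl ⟨j, b', ci⟩ =>
            if i = j ∧ b = b' ∧ ((ci : ℕ) = (ri : ℕ) ∨ (ci : ℕ) = (ri : ℕ) + 1) then 1 else 0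
        | Sum.inr ri, Sum.inr ci =>
            if (ci : ℕ) = (ri : ℕ) ∨ (ci : ℕ) = (ri : ℕ) + 1 then 1 else 0
        | _, _ => 0) := by
  refine ⟨.ofBijective _ (blockRowToPencil_bijective k),
    .ofBijective _ (blockColToPencil_bijective k), ?_⟩
  ext r c
  rw [submatrix_apply, pencil_apply_eq_bidiagEntry, Equiv.ofBijective_apply,
    Equiv.ofBijective_apply, pencilRowCoord_blockRowToPencil, pencilColCoord_blockColToPencil,
    ← bidiagDirectSum_apply ℝ]
  rcases r with ⟨i, b, ri⟩ | ri <;> rcases c with ⟨j, b', ci⟩ | ci <;> rfl
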